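/- arXiv:2012.12568 — 4 statements merged into one kernel-verified Lean document; each statement's English description precedes it below -/
import Mathlib

section
/- Let α be a composition of n and let R_α be the free ℂ-vector space on SYRT(α), with each operator π_i extended ℂ-linearly. Then the operators π_1,…,π_{n−1} satisfy the defining relations of the 0-Hecke algebra H_n(0): π_i² = π_i for all 1 ≤ i ≤ n−1; π_iπ_j = π_jπ_i whenever |i−j| ≥ 2; and π_iπ_{i+1}π_i = π_{i+1}π_iπ_{i+1} for all 1 ≤ i ≤ n−2. In particular, the π_i define an action of H_n(0) on R_α. -/
open Classical

namespace YRS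

/-- `α` is a composition of `n`: a list of positive integers summing to `n`. -/
def IsComposition (n : ℕ) (α : List ℕ) : Prop :=
  (∀ a ∈ α, 0 < a) ∧ α.sum = n

/-- The cell `κ = (c, r)` (column `c`, row `r`, both 1-indexed, French notation)
belongs to the diagram `D(α)`. -/
def inDiagram (α : List ℕ) (κ : ℕ × ℕ) : Prop :=
  1 ≤ κ.2 ∧ κ.2 ≤ α.length ∧ 1 ≤ κ.1 ∧ κ.1 ≤ α.getD (κ.2 - 1) 0

/-- `T` is a standard Young row-strict composition tableau of shape `α` (with entries
`1,…,n`), modelled as a total function on cells that vanishes off the diagram. -/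
def IsSYRT (n : ℕ) (α : List ℕ) (T : ℕ × ℕ → ℕ) : Prop :=
  (∀ κ, ¬ inDiagram α κ → T κ = 0) ∧
  (∀ κ, inDiagram α κ → 1 ≤ T κ ∧ T κ ≤ n) ∧
  (∀ κ κ', inDiagram α κ → inDiagram α κ' → T κ = T κ' → κ = κ') ∧
  (∀ v, 1 ≤ v → v ≤ n → ∃ κ, inDiagram α κ ∧ T κ = v) ∧
  (∀ c r, inDiagram α (c, r) → inDiagram α (c + 1, r) → T (c, r) < T (c + 1, r)) ∧
  (∀ r r', inDiagram α (1, r) → inDiagram α (1, r') → r < r' → T (1, r) < T (1, r')) ∧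
  (∀ c r r', r' < r → inDiagram α (c, r) → inDiagram α (c + 1, r') →
      T (c, r) < T (c + 1, r') → inDiagram α (c + 1, r) ∧ T (c + 1, r) < T (c + 1, r'))

/-- The cell of `T` containing the entry `v` (junk value `(0,0)` if there is none). -/
noncomputable def cellOf (α : List ℕ) (T : ℕ × ℕ → ℕ) (v : ℕ) : ℕ × ℕ :=
  if h : ∃ κ, inDiagram α κ ∧ T κ = v then h.choose else (0, 0)

/-- The filling obtained from `T` by exchanging the entries `i` and `i+1`. -/
def swapFun (i : ℕ) (T : ℕ × ℕ → ℕ) : ℕ × ℕ → ℕ := fun κ =>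
  if T κ = i then i + 1 else if T κ = i + 1 then i else T κ

/-- The 0-Hecke operator `π_i` at the level of fillings:
`some T` if `i+1` is weakly left of `i`; `none` (i.e. `0`) if `i+1` is
right-adjacent to `i`; and `some (s_i T)` otherwise. -/
noncomputable def piFun (α : List ℕ) (i : ℕ) (T : ℕ × ℕ → ℕ) : Option (ℕ × ℕ → ℕ) :=
  if (cellOf α T (i + 1)).1 ≤ (cellOf α T i).1 then some T
  else if cellOf α T (i + 1) = ((cellOf α T i).1 + 1, (cellOf α T i).2) then none
  else some (swapFun i T)

/-- The descent set of `T`: entries `i` (with `1 ≤ i ≤ n-1`) such that `i+1` lies in a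
column strictly to the right of the column of `i`. -/
def DesSet (n : ℕ) (α : List ℕ) (T : ℕ × ℕ → ℕ) : Set ℕ :=
  {i | 1 ≤ i ∧ i < n ∧ (cellOf α T i).1 < (cellOf α T (i + 1)).1}

/-- `T ∼ T'`: in every column, the relative order (bottom to top) of the entries of `T`
agrees with that of `T'`. -/
def simRel (α : List ℕ) (T T' : ℕ × ℕ → ℕ) : Prop :=
  ∀ c r r', inDiagram α (c, r) → inDiagram α (c, r') →
    (T (c, r) < T (c, r') ↔ T' (c, r) < T' (c, r'))

/-- Entries of `T` increase from bottom to top in every column (membership in `E_0`). -/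
def colsIncreasing (α : List ℕ) (T : ℕ × ℕ → ℕ) : Prop :=
  ∀ c r r', inDiagram α (c, r) → inDiagram α (c, r') → r < r' → T (c, r) < T (c, r')

/-- `T` is a source tableau of its `∼`-equivalence class: no `T' ≠ T` in the class of `T`
satisfies `π_i(T') = T` for some `i`. -/
def IsSource (n : ℕ) (α : List ℕ) (T : ℕ × ℕ → ℕ) : Prop :=
  ¬ ∃ T', IsSYRT n α T' ∧ simRel α T' T ∧ T' ≠ T ∧
      ∃ i, 1 ≤ i ∧ i < n ∧ piFun α i T' = some T

/-- One step of the `π`-operators: `π_i(T) = S` (as a tableau) for some `i`. -/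
def piStep (n : ℕ) (α : List ℕ) (T S : ℕ × ℕ → ℕ) : Prop :=
  ∃ i, 1 ≤ i ∧ i < n ∧ piFun α i T = some S

/-- `T ⪯ S`: `S` is obtained from `T` by a (possibly empty) sequence of `π`-operators. -/
def preceq (n : ℕ) (α : List ℕ) : (ℕ × ℕ → ℕ) → (ℕ × ℕ → ℕ) → Prop :=
  Relation.ReflTransGen (piStep n α)

/-- Removable cell of `D(α)`: rightmost cell of the top row, or the rightmost cell of a
row of length at least 2 such that no higher row has exactly one fewer cell. -/
def Removable (α : List ℕ) (κ : ℕ × ℕ) : Prop :=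
  inDiagram α κ ∧ κ.1 = α.getD (κ.2 - 1) 0 ∧
    (κ.2 = α.length ∨
      (2 ≤ α.getD (κ.2 - 1) 0 ∧
        ∀ r, κ.2 < r → r ≤ α.length → α.getD (r - 1) 0 + 1 ≠ α.getD (κ.2 - 1) 0))

/-- A removable cell of `D(α)` containing the largest entry of `T` in its column. -/
def DistRemovable (α : List ℕ) (T : ℕ × ℕ → ℕ) (κ : ℕ × ℕ) : Prop :=
  Removable α κ ∧ ∀ r, inDiagram α (κ.1, r) → r ≠ κ.2 → T (κ.1, r) < T κ

/-- Simple composition: whenever `α_j ≥ α_i ≥ 2` with `i < j`, some `α_k` with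
`i ≤ k ≤ j` equals `α_i - 1`. -/
def SimpleComp (α : List ℕ) : Prop :=
  ∀ i j, 1 ≤ i → i < j → j ≤ α.length → 2 ≤ α.getD (i - 1) 0 →
    α.getD (i - 1) 0 ≤ α.getD (j - 1) 0 →
    ∃ k, i ≤ k ∧ k ≤ j ∧ α.getD (k - 1) 0 + 1 = α.getD (i - 1) 0

/-- Decrease the `i`-th part (1-indexed) of `α` by one, deleting it if it becomes `0`. -/
def reduceAt (α : List ℕ) (i : ℕ) : List ℕ :=
  if α.getD (i - 1) 0 = 1 then α.eraseIdx (i - 1)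
  else α.set (i - 1) (α.getD (i - 1) 0 - 1)

/-- The number of columns of `D(α)`. -/
def width (α : List ℕ) : ℕ := α.foldr max 0

/-- Boundary cell: a cell of the first column, or a cell with no cell of `D(α)` strictly
above it in its own column or the column immediately to the left. -/
def Boundary (α : List ℕ) (κ : ℕ × ℕ) : Prop :=
  inDiagram α κ ∧ (κ.1 = 1 ∨
    ∀ r, κ.2 < r → ¬ inDiagram α (κ.1, r) ∧ ¬ inDiagram α (κ.1 - 1, r))

/-- The boundary cells listed in order: up the first column, then rightwards (for each
column `c ≥ 2` there is at most one boundary cell). -/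
noncomputable def boundaryList (α : List ℕ) : List (ℕ × ℕ) :=
  ((List.range α.length).map fun r => ((1 : ℕ), r + 1)) ++
    ((List.range (width α)).filterMap fun c =>
      if h : ∃ r, Boundary α (c + 2, r) then some ((c + 2, h.choose) : ℕ × ℕ) else none)

/-- The highest cell of `D(α)` strictly below `κ` in the column immediately to the right
of `κ` that is not yet threaded (i.e. not in `S`), if any. -/
noncomputable def nextCell (α : List ℕ) (S : Finset (ℕ × ℕ)) (κ : ℕ × ℕ) :
    Option (ℕ × ℕ) :=
  if h : ∃ r, r < κ.2 ∧ inDiagram α (κ.1 + 1, r) ∧ (κ.1 + 1, r) ∉ S ∧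
      ∀ r', r < r' → r' < κ.2 → inDiagram α (κ.1 + 1, r') → (κ.1 + 1, r') ∈ S
  then some ((κ.1 + 1, h.choose) : ℕ × ℕ) else none

/-- The thread starting at `κ`, given the set `S` of already threaded cells
(`fuel` bounds the length). -/
noncomputable def threadAux (α : List ℕ) (S : Finset (ℕ × ℕ)) :
    ℕ → (ℕ × ℕ) → List (ℕ × ℕ)
  | 0, κ => [κ]
  | fuel + 1, κ =>
      κ ::
        (match nextCell α S κ with
          | none => []
          | some κ' => threadAux α S fuel κ')

/-- The threads of the given boundary cells, constructed iteratively. -/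
noncomputable def threadsAux (α : List ℕ) :
    List (ℕ × ℕ) → Finset (ℕ × ℕ) → List (List (ℕ × ℕ))
  | [], _ => []
  | κ :: rest, S =>
      threadAux α S (width α) κ ::
        threadsAux α rest (S ∪ (threadAux α S (width α) κ).toFinset)

/-- The threads of `D(α)`, in order. -/
noncomputable def threads (α : List ℕ) : List (List (ℕ × ℕ)) :=
  threadsAux α (boundaryList α) ∅

/-- Fill the threads with consecutive integers, each thread from its rightmost cell (the
last cell of the list) to its leftmost cell (the boundary cell). -/
noncomputable def fillAux : List (List (ℕ × ℕ)) → ℕ → (ℕ × ℕ) → ℕ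
  | [], _, _ => 0
  | L :: rest, off, κ =>
      if κ ∈ L then off + L.length - L.idxOf κ else fillAux rest (off + L.length) κ

/-- The tableau `T_sup`: the `k`-th thread is filled with the next `|L_k|` consecutive
integers, from right to left. -/
noncomputable def TsupFun (α : List ℕ) : ℕ × ℕ → ℕ :=
  fun κ => fillAux (threads α) 0 κ

/-- The row-by-row "superstandard" filling: row `r` gets the entries
`α_1 + ⋯ + α_{r-1} + 1, …, α_1 + ⋯ + α_r` from left to right. -/
noncomputable def rowFill (α : List ℕ) : ℕ × ℕ → ℕ :=
  fun κ => if inDiagram α κ then (α.take (κ.2 - 1)).sum + κ.1 else 0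

/-- The type of standard Young row-strict composition tableaux of shape `α`. -/
def SYRTof (n : ℕ) (α : List ℕ) : Type :=
  {T : ℕ × ℕ → ℕ // IsSYRT n α T}

/-- `π_i` applied to a basis vector of the free `ℂ`-vector space on `SYRT(α)`. -/
noncomputable def piVec (n : ℕ) (α : List ℕ) (i : ℕ) (T : SYRTof n α) :
    SYRTof n α →₀ ℂ :=
  match piFun α i T.val with
  | none => 0
  | some T' =>
      if h : IsSYRT n α T' then Finsupp.single (⟨T', h⟩ : SYRTof n α) 1 else 0

/-- The `ℂ`-linear extension of `π_i` to the free `ℂ`-vector space on `SYRT(α)`. -/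
noncomputable def piOp (n : ℕ) (α : List ℕ) (i : ℕ) :
    (SYRTof n α →₀ ℂ) →ₗ[ℂ] (SYRTof n α →₀ ℂ) :=
  Finsupp.lift (SYRTof n α →₀ ℂ) ℂ (SYRTof n α) (piVec n α i)

/-- The span `R_α^{E_0}` of the tableaux whose columns increase from bottom to top. -/
noncomputable def E0span (n : ℕ) (α : List ℕ) : Submodule ℂ (SYRTof n α →₀ ℂ) :=
  Submodule.span ℂ
    ((fun T : SYRTof n α => Finsupp.single T (1 : ℂ)) '' {T | colsIncreasing α T.val})

/-- Apply the operators `π_i` for `i` in the list `l` from left to right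
(`piSeq α [i₁, i₂, …] T = ⋯ (π_{i₂} (π_{i₁} T))`), with `none` meaning `0`. -/
noncomputable def piSeq (α : List ℕ) (l : List ℕ) (T : ℕ × ℕ → ℕ) :
    Option (ℕ × ℕ → ℕ) :=
  l.foldl (fun o i => o.bind (piFun α i)) (some T)

end YRS

namespace YRS

variable {n : ℕ} {α : List ℕ} {T : ℕ × ℕ → ℕ}

lemma cellOf_eq' {v : ℕ} {κ : ℕ × ℕ} (hκ : inDiagram α κ) (hv : T κ = v)
    (huniq : ∀ κ', inDiagram α κ' → T κ' = v → κ' = κ) : cellOf α T v = κ := by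
  have h : ∃ κ, inDiagram α κ ∧ T κ = v := ⟨κ, hκ, hv⟩
  rw [cellOf, dif_pos h]
  exact huniq _ h.choose_spec.1 h.choose_spec.2

lemma cellOf_eq_of_SYRT (hT : IsSYRT n α T) {v : ℕ} {κ : ℕ × ℕ}
    (hκ : inDiagram α κ) (hv : T κ = v) : cellOf α T v = κ :=
  cellOf_eq' hκ hv (fun κ' hκ' hv' => hT.2.2.1 κ' κ hκ' hκ (hv'.trans hv.symm))

lemma cellOf_spec_SYRT (hT : IsSYRT n α T) {v : ℕ} (h1 : 1 ≤ v) (h2 : v ≤ n) :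
    inDiagram α (cellOf α T v) ∧ T (cellOf α T v) = v := by
  obtain ⟨κ, hκ, hv⟩ := hT.2.2.2.1 v h1 h2
  rw [cellOf_eq_of_SYRT hT hκ hv]
  exact ⟨hκ, hv⟩

lemma cellOf_transfer (hT : IsSYRT n α T) {U : ℕ × ℕ → ℕ} {v w : ℕ}
    (h1 : 1 ≤ w) (h2 : w ≤ n) (hval : ∀ κ, U κ = v ↔ T κ = w) :
    cellOf α U v = cellOf α T w := by
  obtain ⟨hκ, hw⟩ := cellOf_spec_SYRT hT h1 h2
  exact cellOf_eq' hκ ((hval _).2 hw)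
    (fun κ' hκ' hv' => hT.2.2.1 κ' _ hκ' hκ (((hval κ').1 hv').trans hw.symm))

end YRS
namespace YRS

variable {n : ℕ} {α : List ℕ} {T : ℕ × ℕ → ℕ}

lemma swapFun_apply (i : ℕ) (T : ℕ × ℕ → ℕ) (κ : ℕ × ℕ) :
    swapFun i T κ = if T κ = i then i + 1 else if T κ = i + 1 then i else T κ := rfl

lemma swap_SYRT (hT : IsSYRT n α T) {i : ℕ} (hi : 1 ≤ i) (hn : i + 1 ≤ n)
    (hcol : (cellOf α T i).1 < (cellOf α T (i+1)).1)
    (hadj : cellOf α T (i+1) ≠ ((cellOf α T i).1 + 1, (cellOf α T i).2)) :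
    IsSYRT n α (swapFun i T) := by
  obtain ⟨ha, hTa⟩ := cellOf_spec_SYRT hT (le_refl 1 |>.trans hi) (le_trans (by omega) hn)
  obtain ⟨hb, hTb⟩ := cellOf_spec_SYRT hT (by omega : 1 ≤ i + 1) hn
  set a := cellOf α T i with ha'
  set b := cellOf α T (i+1) with hb'
  have hvi : ∀ κ, inDiagram α κ → T κ = i → κ = a :=
    fun κ hκ h => hT.2.2.1 κ a hκ ha (h.trans hTa.symm)
  have hvi1 : ∀ κ, inDiagram α κ → T κ = i + 1 → κ = b :=
    fun κ hκ h => hT.2.2.1 κ b hκ hb (h.trans hTb.symm)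
  refine ⟨?_, ?_, ?_, ?_, ?_, ?_, ?_⟩
  · intro κ hκ
    have h0 := hT.1 κ hκ
    rw [swapFun_apply, h0]
    split_ifs <;> first | omega | tauto
  · intro κ hκ
    have h0 := hT.2.1 κ hκ
    rw [swapFun_apply]
    split_ifs <;> first | omega | tauto
  · intro κ κ' hκ hκ' h
    apply hT.2.2.1 κ κ' hκ hκ'
    rw [swapFun_apply, swapFun_apply] at h
    split_ifs at h <;> omega
  · intro v h1 h2
    by_cases hv : v = i
    · exact ⟨b, hb, by rw [swapFun_apply, hTb]; split_ifs <;> first | omega | tauto⟩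
    by_cases hv1 : v = i + 1
    · exact ⟨a, ha, by rw [swapFun_apply, hTa]; split_ifs <;> first | omega | tauto⟩
    obtain ⟨κ, hκ, hvκ⟩ := hT.2.2.2.1 v h1 h2
    exact ⟨κ, hκ, by rw [swapFun_apply, hvκ]; split_ifs <;> first | omega | tauto⟩
  · intro c r h1 h2
    have h3 := hT.2.2.2.2.1 c r h1 h2
    have h4 : ¬ (T (c, r) = i ∧ T (c+1, r) = i + 1) := by
      rintro ⟨e1, e2⟩
      have e3 := hvi _ h1 e1
      have e4 := hvi1 _ h2 e2
      apply hadj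
      rw [← e4, ← e3]
    rw [swapFun_apply, swapFun_apply]
    split_ifs <;> first | omega | tauto
  · intro r r' h1 h2 hr
    have h3 := hT.2.2.2.2.2.1 r r' h1 h2 hr
    have h4 : ¬ (T (1, r) = i ∧ T (1, r') = i + 1) := by
      rintro ⟨e1, e2⟩
      have e3 := hvi1 _ h2 e2
      have : b.1 = 1 := by rw [← e3]
      have : 1 ≤ a.1 := ha.2.2.1
      omega
    rw [swapFun_apply, swapFun_apply]
    split_ifs <;> first | omega | tauto
  · intro c r r' hr h1 h2 hlt
    rw [swapFun_apply, swapFun_apply] at hlt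
    have hxy : T (c, r) < T (c+1, r') := by
      by_cases hcase : T (c, r) = i + 1 ∧ T (c+1, r') = i
      · exfalso
        have e1 := hvi1 _ h1 hcase.1
        have e2 := hvi _ h2 hcase.2
        have : a.1 = c + 1 := by rw [← e2]
        have : b.1 = c := by rw [← e1]
        omega
      · split_ifs at hlt <;> omega
    obtain ⟨hz, hzlt⟩ := hT.2.2.2.2.2.2 c r r' hr h1 h2 hxy
    refine ⟨hz, ?_⟩
    have h5 : ¬ (T (c+1, r) = i ∧ T (c+1, r') = i + 1) := by
      rintro ⟨e1, e2⟩
      have e3 := hvi _ hz e1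
      have e4 := hvi1 _ h2 e2
      have : a.1 = c + 1 := by rw [← e3]
      have : b.1 = c + 1 := by rw [← e4]
      omega
    rw [swapFun_apply, swapFun_apply]
    split_ifs <;> first | omega | tauto

end YRS
namespace YRS

variable {n : ℕ} {α : List ℕ} {T : ℕ × ℕ → ℕ}

lemma piFun_eq {i : ℕ} {a b : ℕ × ℕ} (ha : cellOf α T i = a) (hb : cellOf α T (i+1) = b) :
    piFun α i T = if b.1 ≤ a.1 then some T
      else if b = (a.1 + 1, a.2) then none else some (swapFun i T) := by
  rw [piFun, ha, hb]

lemma fil_idem (hT : IsSYRT n α T) {i : ℕ} (hi : 1 ≤ i) (hn : i + 1 ≤ n) :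
    (piFun α i T).bind (piFun α i) = piFun α i T := by
  have hsw_i : cellOf α (swapFun i T) i = cellOf α T (i+1) :=
    cellOf_transfer hT (by omega) hn
      (fun κ => by rw [swapFun_apply]; split_ifs <;> omega)
  have hsw_i1 : cellOf α (swapFun i T) (i+1) = cellOf α T i :=
    cellOf_transfer hT hi (by omega)
      (fun κ => by rw [swapFun_apply]; split_ifs <;> omega)
  rw [piFun_eq rfl rfl]
  split_ifs with h1 h2
  · rw [Option.bind_some, piFun_eq rfl rfl, if_pos h1]
  · rfl
  · rw [Option.bind_some, piFun_eq hsw_i hsw_i1, if_pos (by omega)]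

lemma fil_comm (hT : IsSYRT n α T) {i j : ℕ} (hi : 1 ≤ i) (hin : i + 1 ≤ n)
    (hj : 1 ≤ j) (hjn : j + 1 ≤ n) (hd : i + 2 ≤ j ∨ j + 2 ≤ i) :
    (piFun α j T).bind (piFun α i) = (piFun α i T).bind (piFun α j) := by
  have tri : ∀ v, 1 ≤ v → v ≤ n → v ≠ i → v ≠ i + 1 →
      cellOf α (swapFun i T) v = cellOf α T v := fun v h1 h2 h3 h4 =>
    cellOf_transfer hT h1 h2 (fun κ => by rw [swapFun_apply]; split_ifs <;> omega)
  have trj : ∀ v, 1 ≤ v → v ≤ n → v ≠ j → v ≠ j + 1 →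
      cellOf α (swapFun j T) v = cellOf α T v := fun v h1 h2 h3 h4 =>
    cellOf_transfer hT h1 h2 (fun κ => by rw [swapFun_apply]; split_ifs <;> omega)
  have hcomm : swapFun i (swapFun j T) = swapFun j (swapFun i T) := by
    funext κ
    simp only [swapFun_apply]
    split_ifs <;> omega
  have hci : cellOf α (swapFun j T) i = cellOf α T i :=
    trj i hi (by omega) (by omega) (by omega)
  have hci1 : cellOf α (swapFun j T) (i+1) = cellOf α T (i+1) :=
    trj (i+1) (by omega) hin (by omega) (by omega)
  have hcj : cellOf α (swapFun i T) j = cellOf α T j :=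
    tri j hj (by omega) (by omega) (by omega)
  have hcj1 : cellOf α (swapFun i T) (j+1) = cellOf α T (j+1) :=
    tri (j+1) (by omega) hjn (by omega) (by omega)
  have pj : piFun α j T = if (cellOf α T (j+1)).1 ≤ (cellOf α T j).1 then some T
      else if cellOf α T (j+1) = ((cellOf α T j).1 + 1, (cellOf α T j).2) then none
      else some (swapFun j T) := piFun_eq rfl rfl
  have pi' : piFun α i T = if (cellOf α T (i+1)).1 ≤ (cellOf α T i).1 then some T
      else if cellOf α T (i+1) = ((cellOf α T i).1 + 1, (cellOf α T i).2) then none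
      else some (swapFun i T) := piFun_eq rfl rfl
  have pjsw : piFun α j (swapFun i T) = if (cellOf α T (j+1)).1 ≤ (cellOf α T j).1
      then some (swapFun i T)
      else if cellOf α T (j+1) = ((cellOf α T j).1 + 1, (cellOf α T j).2) then none
      else some (swapFun j (swapFun i T)) := piFun_eq hcj hcj1
  have pisw : piFun α i (swapFun j T) = if (cellOf α T (i+1)).1 ≤ (cellOf α T i).1
      then some (swapFun j T)
      else if cellOf α T (i+1) = ((cellOf α T i).1 + 1, (cellOf α T i).2) then none
      else some (swapFun i (swapFun j T)) := piFun_eq hci hci1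
  by_cases h1 : (cellOf α T (j+1)).1 ≤ (cellOf α T j).1
  · rw [pj, if_pos h1, Option.bind_some]
    by_cases h3 : (cellOf α T (i+1)).1 ≤ (cellOf α T i).1
    · rw [pi', if_pos h3, Option.bind_some, pj, if_pos h1]
    by_cases h4 : cellOf α T (i+1) = ((cellOf α T i).1 + 1, (cellOf α T i).2)
    · rw [pi', if_neg h3, if_pos h4, Option.bind_none]
    · rw [pi', if_neg h3, if_neg h4, Option.bind_some, pjsw, if_pos h1]
  by_cases h2 : cellOf α T (j+1) = ((cellOf α T j).1 + 1, (cellOf α T j).2)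
  · rw [pj, if_neg h1, if_pos h2, Option.bind_none]
    by_cases h3 : (cellOf α T (i+1)).1 ≤ (cellOf α T i).1
    · rw [pi', if_pos h3, Option.bind_some, pj, if_neg h1, if_pos h2]
    by_cases h4 : cellOf α T (i+1) = ((cellOf α T i).1 + 1, (cellOf α T i).2)
    · rw [pi', if_neg h3, if_pos h4, Option.bind_none]
    · rw [pi', if_neg h3, if_neg h4, Option.bind_some, pjsw, if_neg h1, if_pos h2]
  · rw [pj, if_neg h1, if_neg h2, Option.bind_some, pisw]
    by_cases h3 : (cellOf α T (i+1)).1 ≤ (cellOf α T i).1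
    · rw [if_pos h3, pi', if_pos h3, Option.bind_some, pj, if_neg h1, if_neg h2]
    by_cases h4 : cellOf α T (i+1) = ((cellOf α T i).1 + 1, (cellOf α T i).2)
    · rw [if_neg h3, if_pos h4, pi', if_neg h3, if_pos h4, Option.bind_none]
      
    · rw [if_neg h3, if_neg h4, pi', if_neg h3, if_neg h4, Option.bind_some,
        pjsw, if_neg h1, if_neg h2, hcomm]

end YRS
namespace YRS

variable {n : ℕ} {α : List ℕ} {T : ℕ × ℕ → ℕ}

lemma ne_pair_of_fst {x : ℕ × ℕ} {p q : ℕ} (h : x.1 ≠ p) : x ≠ (p, q) :=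
  fun h' => h (by rw [h'])

set_option maxHeartbeats 1000000 in
lemma fil_braid (hT : IsSYRT n α T) {i : ℕ} (hi : 1 ≤ i) (hn : i + 2 ≤ n) :
    ((piFun α i T).bind (piFun α (i+1))).bind (piFun α i) =
      ((piFun α (i+1) T).bind (piFun α i)).bind (piFun α (i+1)) := by
  obtain ⟨a, hA⟩ : ∃ x, cellOf α T i = x := ⟨_, rfl⟩
  obtain ⟨b, hB⟩ : ∃ x, cellOf α T (i+1) = x := ⟨_, rfl⟩
  obtain ⟨c, hC⟩ : ∃ x, cellOf α T (i+1+1) = x := ⟨_, rfl⟩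
  set U1 := swapFun i T with hU1
  set U2 := swapFun (i+1) T with hU2
  set V1 := swapFun (i+1) U1 with hV1
  set V2 := swapFun i U2 with hV2
  have tr : ∀ (U : ℕ × ℕ → ℕ) (v w : ℕ), 1 ≤ w → w ≤ n → (∀ κ, U κ = v ↔ T κ = w) →
      cellOf α U v = cellOf α T w := fun U v w h1 h2 hval => cellOf_transfer hT h1 h2 hval
  have cU1i : cellOf α U1 i = b := (tr U1 i (i+1) (by omega) (by omega)
    (fun κ => by rw [hU1, swapFun_apply]; split_ifs <;> omega)).trans hB
  have cU1i1 : cellOf α U1 (i+1) = a := (tr U1 (i+1) i (by omega) (by omega)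
    (fun κ => by rw [hU1, swapFun_apply]; split_ifs <;> omega)).trans hA
  have cU1i2 : cellOf α U1 (i+1+1) = c := (tr U1 (i+1+1) (i+1+1) (by omega) (by omega)
    (fun κ => by rw [hU1, swapFun_apply]; split_ifs <;> omega)).trans hC
  have cU2i : cellOf α U2 i = a := (tr U2 i i (by omega) (by omega)
    (fun κ => by rw [hU2, swapFun_apply]; split_ifs <;> omega)).trans hA
  have cU2i1 : cellOf α U2 (i+1) = c := (tr U2 (i+1) (i+1+1) (by omega) (by omega)
    (fun κ => by rw [hU2, swapFun_apply]; split_ifs <;> omega)).trans hC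
  have cU2i2 : cellOf α U2 (i+1+1) = b := (tr U2 (i+1+1) (i+1) (by omega) (by omega)
    (fun κ => by rw [hU2, swapFun_apply]; split_ifs <;> omega)).trans hB
  have cV1i : cellOf α V1 i = b := (tr V1 i (i+1) (by omega) (by omega)
    (fun κ => by rw [hV1, hU1]; simp only [swapFun_apply]; split_ifs <;> omega)).trans hB
  have cV1i1 : cellOf α V1 (i+1) = c := (tr V1 (i+1) (i+1+1) (by omega) (by omega)
    (fun κ => by rw [hV1, hU1]; simp only [swapFun_apply]; split_ifs <;> omega)).trans hC
  have cV2i1 : cellOf α V2 (i+1) = a := (tr V2 (i+1) i (by omega) (by omega)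
    (fun κ => by rw [hV2, hU2]; simp only [swapFun_apply]; split_ifs <;> omega)).trans hA
  have cV2i2 : cellOf α V2 (i+1+1) = b := (tr V2 (i+1+1) (i+1) (by omega) (by omega)
    (fun κ => by rw [hV2, hU2]; simp only [swapFun_apply]; split_ifs <;> omega)).trans hB
  have hW : swapFun i V1 = swapFun (i+1) V2 := by
    funext κ
    rw [hV1, hV2, hU1, hU2]
    simp only [swapFun_apply]
    split_ifs <;> omega
  have pT_i : piFun α i T = if b.1 ≤ a.1 then some T
      else if b = (a.1 + 1, a.2) then none else some U1 := piFun_eq hA hB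
  have pT_i1 : piFun α (i+1) T = if c.1 ≤ b.1 then some T
      else if c = (b.1 + 1, b.2) then none else some U2 := piFun_eq hB hC
  have pU1_i : piFun α i U1 = if a.1 ≤ b.1 then some U1
      else if a = (b.1 + 1, b.2) then none else some (swapFun i U1) := piFun_eq cU1i cU1i1
  have pU1_i1 : piFun α (i+1) U1 = if c.1 ≤ a.1 then some U1
      else if c = (a.1 + 1, a.2) then none else some V1 := piFun_eq cU1i1 cU1i2
  have pU2_i : piFun α i U2 = if c.1 ≤ a.1 then some U2
      else if c = (a.1 + 1, a.2) then none else some V2 := piFun_eq cU2i cU2i1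
  have pU2_i1 : piFun α (i+1) U2 = if b.1 ≤ c.1 then some U2
      else if b = (c.1 + 1, c.2) then none else some (swapFun (i+1) U2) :=
    piFun_eq cU2i1 cU2i2
  have pV1_i : piFun α i V1 = if c.1 ≤ b.1 then some V1
      else if c = (b.1 + 1, b.2) then none else some (swapFun i V1) := piFun_eq cV1i cV1i1
  have pV2_i1 : piFun α (i+1) V2 = if b.1 ≤ a.1 then some V2
      else if b = (a.1 + 1, a.2) then none else some (swapFun (i+1) V2) :=
    piFun_eq cV2i1 cV2i2
  by_cases h1 : b.1 ≤ a.1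
  · by_cases h2 : c.1 ≤ b.1
    · simp only [pT_i, pT_i1, if_pos h1, if_pos h2, Option.bind_some]
    by_cases h3 : c = (b.1 + 1, b.2)
    · simp only [pT_i, pT_i1, if_pos h1, if_neg h2, if_pos h3, Option.bind_some,
        Option.bind_none]
    by_cases h4 : c.1 ≤ a.1
    · simp only [pT_i, pT_i1, pU2_i, pU2_i1, if_pos h1, if_neg h2, if_neg h3, if_pos h4,
        if_pos (show b.1 ≤ c.1 by omega), Option.bind_some]
    by_cases h5 : c = (a.1 + 1, a.2)
    · simp only [pT_i, pT_i1, pU2_i, if_pos h1, if_neg h2, if_neg h3, if_neg h4,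
        if_pos h5, Option.bind_some, Option.bind_none]
    · simp only [pT_i, pT_i1, pU2_i, pV2_i1, if_pos h1, if_neg h2, if_neg h3, if_neg h4,
        if_neg h5, Option.bind_some]
  by_cases h2 : b = (a.1 + 1, a.2)
  · have hb1 : b.1 = a.1 + 1 := by rw [h2]
    by_cases h3 : c.1 ≤ b.1
    · simp only [pT_i, pT_i1, if_neg h1, if_pos h2, if_pos h3, Option.bind_some,
        Option.bind_none]
    by_cases h4 : c = (b.1 + 1, b.2)
    · simp only [pT_i, pT_i1, if_neg h1, if_pos h2, if_neg h3, if_pos h4,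
        Option.bind_some, Option.bind_none]
    · simp only [pT_i, pT_i1, pU2_i, pV2_i1, if_neg h1, if_pos h2, if_neg h3, if_neg h4,
        if_neg (show ¬ c.1 ≤ a.1 by omega),
        if_neg (ne_pair_of_fst (show c.1 ≠ a.1 + 1 by omega)),
        Option.bind_some, Option.bind_none]
  · -- π_i T = some U1
    by_cases h3 : c.1 ≤ a.1
    · simp only [pT_i, pT_i1, pU1_i, pU1_i1, if_neg h1, if_neg h2, if_pos h3,
        if_pos (show a.1 ≤ b.1 by omega), if_pos (show c.1 ≤ b.1 by omega),
        Option.bind_some]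
    by_cases h4 : c = (a.1 + 1, a.2)
    · have hc1 : c.1 = a.1 + 1 := by rw [h4]
      simp only [pT_i, pT_i1, pU1_i1, if_neg h1, if_neg h2, if_neg h3, if_pos h4,
        if_pos (show c.1 ≤ b.1 by omega), Option.bind_some, Option.bind_none]
    by_cases h5 : c.1 ≤ b.1
    · simp only [pT_i, pT_i1, pU1_i1, pV1_i, if_neg h1, if_neg h2, if_neg h3, if_neg h4,
        if_pos h5, Option.bind_some]
    by_cases h6 : c = (b.1 + 1, b.2)
    · simp only [pT_i, pT_i1, pU1_i1, pV1_i, if_neg h1, if_neg h2, if_neg h3, if_neg h4,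
        if_neg h5, if_pos h6, Option.bind_some, Option.bind_none]
    · simp only [pT_i, pT_i1, pU1_i1, pU2_i, pV1_i, pV2_i1, if_neg h1, if_neg h2,
        if_neg h3, if_neg h4, if_neg h5, if_neg h6, Option.bind_some, hW]

end YRS
namespace YRS

variable {n : ℕ} {α : List ℕ} {T : ℕ × ℕ → ℕ}

lemma piFun_SYRT (hT : IsSYRT n α T) {i : ℕ} (hi : 1 ≤ i) (hn : i + 1 ≤ n) {T' : ℕ × ℕ → ℕ}
    (h : piFun α i T = some T') : IsSYRT n α T' := by
  rw [piFun] at h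
  split_ifs at h with h1 h2
  · exact (Option.some_inj.mp h) ▸ hT
  · exact (Option.some_inj.mp h) ▸ swap_SYRT hT hi hn (by omega) h2

noncomputable def optVec (n : ℕ) (α : List ℕ) (o : Option (ℕ × ℕ → ℕ)) :
    SYRTof n α →₀ ℂ :=
  o.elim 0 (fun T' => if h : IsSYRT n α T' then Finsupp.single (⟨T', h⟩ : SYRTof n α) 1 else 0)

lemma piVec_eq (i : ℕ) (T : SYRTof n α) : piVec n α i T = optVec n α (piFun α i T.val) := by
  cases h : piFun α i T.val <;> simp [piVec, optVec, h]

lemma piOp_single (i : ℕ) (T : SYRTof n α) :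
    piOp n α i (Finsupp.single T 1) = piVec n α i T := by
  simp [piOp]

lemma piOp_optVec {i : ℕ} (hi : 1 ≤ i) (hn : i + 1 ≤ n) (o : Option (ℕ × ℕ → ℕ))
    (hOK : ∀ S, o = some S → IsSYRT n α S) :
    piOp n α i (optVec n α o) = optVec n α (o.bind (piFun α i)) := by
  cases o with
  | none => simp [optVec]
  | some S =>
    have hS := hOK S rfl
    rw [Option.bind_some]
    show piOp n α i (optVec n α (some S)) = optVec n α (piFun α i S)
    have h1 : optVec n α (some S) = Finsupp.single (α := SYRTof n α) ⟨S, hS⟩ 1 := by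
      exact dif_pos hS
    rw [h1]
    exact (piOp_single (T := (⟨S, hS⟩ : SYRTof n α)) i).trans (piVec_eq i _)

lemma piOp_single_eq {i : ℕ} (T : SYRTof n α) :
    piOp n α i (Finsupp.single T 1) = optVec n α (piFun α i T.val) := by
  rw [piOp_single, piVec_eq]

end YRS

/-- The linearly extended operators `π_i` on the free `ℂ`-vector space
on `SYRT(α)` satisfy the defining relations of the 0-Hecke algebra `H_n(0)`:
idempotence, commutation for `|i - j| ≥ 2`, and the braid relations. -/
theorem stmt1 (n : ℕ) (α : List ℕ) (hα : YRS.IsComposition n α) :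
    (∀ i, 1 ≤ i → i < n →
      YRS.piOp n α i ∘ₗ YRS.piOp n α i = YRS.piOp n α i) ∧
    (∀ i j, 1 ≤ i → i < n → 1 ≤ j → j < n → (i + 2 ≤ j ∨ j + 2 ≤ i) →
      YRS.piOp n α i ∘ₗ YRS.piOp n α j = YRS.piOp n α j ∘ₗ YRS.piOp n α i) ∧
    (∀ i, 1 ≤ i → i + 1 < n →
      YRS.piOp n α i ∘ₗ YRS.piOp n α (i + 1) ∘ₗ YRS.piOp n α i =
        YRS.piOp n α (i + 1) ∘ₗ YRS.piOp n α i ∘ₗ YRS.piOp n α (i + 1)) := by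
  open YRS in
  have ext1 : ∀ (f g : (SYRTof n α →₀ ℂ) →ₗ[ℂ] (SYRTof n α →₀ ℂ)),
      (∀ T : SYRTof n α, f (Finsupp.single T 1) = g (Finsupp.single T 1)) → f = g := by
    intro f g h
    apply Finsupp.lhom_ext
    intro T r
    have hr : (Finsupp.single T r : SYRTof n α →₀ ℂ) = r • Finsupp.single T 1 := by
      rw [Finsupp.smul_single, smul_eq_mul, mul_one]
    rw [hr, map_smul, map_smul, h]
  refine ⟨?_, ?_, ?_⟩
  · intro i hi hin
    apply ext1
    intro T
    have hOK : ∀ S, YRS.piFun α i T.val = some S → YRS.IsSYRT n α S :=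
      fun S h => YRS.piFun_SYRT T.2 hi (by omega) h
    rw [LinearMap.comp_apply, YRS.piOp_single_eq, YRS.piOp_optVec hi (by omega) _ hOK,
      YRS.fil_idem T.2 hi (by omega)]
  · intro i j hi hin hj hjn hd
    apply ext1
    intro T
    have hOKj : ∀ S, YRS.piFun α j T.val = some S → YRS.IsSYRT n α S :=
      fun S h => YRS.piFun_SYRT T.2 hj (by omega) h
    have hOKi : ∀ S, YRS.piFun α i T.val = some S → YRS.IsSYRT n α S :=
      fun S h => YRS.piFun_SYRT T.2 hi (by omega) h
    rw [LinearMap.comp_apply, LinearMap.comp_apply, YRS.piOp_single_eq,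
      YRS.piOp_single_eq, YRS.piOp_optVec hi (by omega) _ hOKj,
      YRS.piOp_optVec hj (by omega) _ hOKi,
      YRS.fil_comm T.2 hi (by omega) hj (by omega) hd]
  · intro i hi hin
    apply ext1
    intro T
    have hOKi : ∀ S, YRS.piFun α i T.val = some S → YRS.IsSYRT n α S :=
      fun S h => YRS.piFun_SYRT T.2 hi (by omega) h
    have hOKi1 : ∀ S, YRS.piFun α (i+1) T.val = some S → YRS.IsSYRT n α S :=
      fun S h => YRS.piFun_SYRT T.2 (by omega) (by omega) h
    have hOK2 : ∀ S, (YRS.piFun α i T.val).bind (YRS.piFun α (i+1)) = some S →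
        YRS.IsSYRT n α S := by
      intro S h
      rw [Option.bind_eq_some_iff] at h
      obtain ⟨m, h1, h2⟩ := h
      exact YRS.piFun_SYRT (hOKi m h1) (by omega) (by omega) h2
    have hOK2' : ∀ S, (YRS.piFun α (i+1) T.val).bind (YRS.piFun α i) = some S →
        YRS.IsSYRT n α S := by
      intro S h
      rw [Option.bind_eq_some_iff] at h
      obtain ⟨m, h1, h2⟩ := h
      exact YRS.piFun_SYRT (hOKi1 m h1) hi (by omega) h2
    rw [LinearMap.comp_apply, LinearMap.comp_apply, LinearMap.comp_apply,
      LinearMap.comp_apply, YRS.piOp_single_eq, YRS.piOp_single_eq,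
      YRS.piOp_optVec (by omega : 1 ≤ i + 1) (by omega) _ hOKi,
      YRS.piOp_optVec hi (by omega) _ hOKi1,
      YRS.piOp_optVec hi (by omega) _ hOK2,
      YRS.piOp_optVec (by omega : 1 ≤ i + 1) (by omega) _ hOK2',
      YRS.fil_braid T.2 hi (by omega)]
end

section
/- Let α be a composition of n. The relation ⪯ on SYRT(α), defined by T ⪯ S if S can be obtained from T by applying a (possibly empty) sequence of operators π_i (with every intermediate result a tableau, never 0), is a partial order on SYRT(α); in particular it is antisymmetric. -/
open Classical

/-- Potential function: weighted sum of columns of entries. -/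
noncomputable def stmt2Phi (n : ℕ) (α : List ℕ) (T : ℕ × ℕ → ℕ) : ℕ :=
  ∑ v ∈ Finset.range (n + 1), v * (YRS.cellOf α T v).1

lemma stmt2CellOfExt {α : List ℕ} {T T' : ℕ × ℕ → ℕ} {v v' : ℕ}
    (h : ∀ κ, T κ = v ↔ T' κ = v') :
    YRS.cellOf α T v = YRS.cellOf α T' v' := by
  have hp : (fun κ => YRS.inDiagram α κ ∧ T κ = v)
      = fun κ => YRS.inDiagram α κ ∧ T' κ = v' := by
    funext κ; exact propext (and_congr_right fun _ => h κ)
  unfold YRS.cellOf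
  exact congrArg
    (fun p : (ℕ × ℕ) → Prop => if hh : ∃ κ, p κ then hh.choose else ((0, 0) : ℕ × ℕ)) hp

lemma stmt2StepPhi {n : ℕ} {α : List ℕ} {T S : ℕ × ℕ → ℕ}
    (h : YRS.piStep n α T S) : S = T ∨ stmt2Phi n α S < stmt2Phi n α T := by
  obtain ⟨i, hi1, hi2, hpi⟩ := h
  unfold YRS.piFun at hpi
  split_ifs at hpi with h1 h2
  · left; exact (Option.some.inj hpi).symm
  · right
    have hS : S = YRS.swapFun i T := (Option.some.inj hpi).symm
    subst hS
    have hci : YRS.cellOf α (YRS.swapFun i T) i = YRS.cellOf α T (i + 1) := by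
      apply stmt2CellOfExt
      intro κ; unfold YRS.swapFun; split_ifs with ha hb <;> omega
    have hcj : YRS.cellOf α (YRS.swapFun i T) (i + 1) = YRS.cellOf α T i := by
      apply stmt2CellOfExt
      intro κ; unfold YRS.swapFun; split_ifs with ha hb <;> omega
    have hother : ∀ v, v ≠ i → v ≠ i + 1 →
        YRS.cellOf α (YRS.swapFun i T) v = YRS.cellOf α T v := by
      intro v hv1 hv2
      apply stmt2CellOfExt
      intro κ; unfold YRS.swapFun; split_ifs with ha hb <;> omega
    set s := Finset.range (n + 1) with hs
    have his : i ∈ s := by simp [hs]; omega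
    have hjs : i + 1 ∈ s.erase i := by
      rw [Finset.mem_erase]; constructor; · omega
      simp [hs]; omega
    have split1 : ∀ f : ℕ → ℕ, ∑ v ∈ s, f v
        = ∑ v ∈ (s.erase i).erase (i + 1), f v + f (i + 1) + f i := by
      intro f
      rw [← Finset.sum_erase_add s f his, ← Finset.sum_erase_add (s.erase i) f hjs]
    unfold stmt2Phi
    rw [split1 (fun v => v * (YRS.cellOf α (YRS.swapFun i T) v).1),
        split1 (fun v => v * (YRS.cellOf α T v).1)]
    have hsum : ∑ v ∈ (s.erase i).erase (i + 1),
        v * (YRS.cellOf α (YRS.swapFun i T) v).1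
        = ∑ v ∈ (s.erase i).erase (i + 1), v * (YRS.cellOf α T v).1 := by
      apply Finset.sum_congr rfl
      intro v hv
      rw [Finset.mem_erase, Finset.mem_erase] at hv
      rw [hother v hv.2.1 hv.1]
    rw [hsum, hci, hcj]
    have hlt : (YRS.cellOf α T i).1 < (YRS.cellOf α T (i + 1)).1 := by omega
    set a := (YRS.cellOf α T i).1
    set b := (YRS.cellOf α T (i + 1)).1
    have : (i + 1) * a + i * b < (i + 1) * b + i * a := by nlinarith
    omega

lemma stmt2PreceqPhi {n : ℕ} {α : List ℕ} {T S : ℕ × ℕ → ℕ}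
    (h : YRS.preceq n α T S) : S = T ∨ stmt2Phi n α S < stmt2Phi n α T := by
  induction h with
  | refl => left; rfl
  | tail _ hstep ih =>
      rcases stmt2StepPhi hstep with rfl | hlt
      · exact ih
      · rcases ih with rfl | ih2
        · right; exact hlt
        · right; omega

/-- The relation `⪯` (obtained by applying sequences of `π`-operators,
all intermediate results being tableaux) is reflexive, transitive, and antisymmetric on
`SYRT(α)`, hence a partial order. -/
theorem stmt2 (n : ℕ) (α : List ℕ) (hα : YRS.IsComposition n α) :
    (∀ T, YRS.preceq n α T T) ∧
    (∀ T S U, YRS.preceq n α T S → YRS.preceq n α S U → YRS.preceq n α T U) ∧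
    (∀ T S, YRS.IsSYRT n α T → YRS.IsSYRT n α S →
      YRS.preceq n α T S → YRS.preceq n α S T → T = S) := by
  refine ⟨fun T => Relation.ReflTransGen.refl,
    fun T S U h1 h2 => h1.trans h2, fun T S _ _ h1 h2 => ?_⟩
  rcases stmt2PreceqPhi h1 with rfl | hlt1
  · rfl
  · rcases stmt2PreceqPhi h2 with rfl | hlt2
    · rfl
    · omega
end

section
/- For any composition α of n, every ∼-equivalence class of SYRT(α) contains at least one source tableau. -/
open Classical

section Stmt7Aux

open YRS

private lemma getD_le_sum' : ∀ (l : List ℕ) (i : ℕ), l.getD i 0 ≤ l.sum := by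
  intro l
  induction l with
  | nil => intro i; simp
  | cons a t ih =>
    intro i
    cases i with
    | zero => simp
    | succ j =>
      simp only [List.getD_cons_succ, List.sum_cons]
      exact (ih j).trans (Nat.le_add_left _ _)

/-- Weight of a filling: sum of entry times its column. -/
private noncomputable def mWt (n : ℕ) (α : List ℕ) (S : ℕ × ℕ → ℕ) : ℕ :=
  ∑ v ∈ Finset.Icc 1 n, v * (YRS.cellOf α S v).1

private lemma cellOf_eq_of (α : List ℕ) (T : ℕ × ℕ → ℕ) (v : ℕ) (κ0 : ℕ × ℕ)
    (hκ : inDiagram α κ0) (hv : T κ0 = v)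
    (huniq : ∀ κ, inDiagram α κ → T κ = v → κ = κ0) : cellOf α T v = κ0 := by
  have h : ∃ κ, inDiagram α κ ∧ T κ = v := ⟨κ0, hκ, hv⟩
  simp only [cellOf, dif_pos h]
  exact huniq _ h.choose_spec.1 h.choose_spec.2

private lemma cellOf_spec {n : ℕ} {α : List ℕ} {T : ℕ × ℕ → ℕ} (hT : IsSYRT n α T)
    {v : ℕ} (h1 : 1 ≤ v) (h2 : v ≤ n) :
    inDiagram α (cellOf α T v) ∧ T (cellOf α T v) = v := by
  have h : ∃ κ, inDiagram α κ ∧ T κ = v := hT.2.2.2.1 v h1 h2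
  simp only [cellOf, dif_pos h]
  exact h.choose_spec

private lemma swap_cells {n : ℕ} {α : List ℕ} {T' : ℕ × ℕ → ℕ} (hT' : IsSYRT n α T')
    {i : ℕ} (h1 : 1 ≤ i) (h2 : i + 1 ≤ n) :
    cellOf α (swapFun i T') i = cellOf α T' (i + 1) ∧
    cellOf α (swapFun i T') (i + 1) = cellOf α T' i ∧
    ∀ v, 1 ≤ v → v ≤ n → v ≠ i → v ≠ i + 1 →
      cellOf α (swapFun i T') v = cellOf α T' v := by
  obtain ⟨hdi, hvi⟩ := cellOf_spec hT' h1 (le_of_lt (Nat.lt_of_succ_le h2))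
  obtain ⟨hdi1, hvi1⟩ := cellOf_spec hT' (by omega : 1 ≤ i + 1) h2
  have hinj := hT'.2.2.1
  refine ⟨?_, ?_, ?_⟩
  · refine cellOf_eq_of _ _ _ _ hdi1 ?_ ?_
    · simp only [swapFun, hvi1]
      simp
    · intro κ hκ hval
      simp only [swapFun] at hval
      split_ifs at hval with ha hb
      · omega
      · exact hinj _ _ hκ hdi1 (hb.trans hvi1.symm)
      · exact absurd hval ha
  · refine cellOf_eq_of _ _ _ _ hdi ?_ ?_
    · simp only [swapFun, hvi]
      simp
    · intro κ hκ hval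
      simp only [swapFun] at hval
      split_ifs at hval with ha hb
      · exact hinj _ _ hκ hdi (ha.trans hvi.symm)
      · omega
      · exact absurd hval hb
  · intro v hv1 hv2 hvne hvne1
    obtain ⟨hdv, hvv⟩ := cellOf_spec hT' hv1 hv2
    refine cellOf_eq_of _ _ _ _ hdv ?_ ?_
    · simp only [swapFun, hvv]
      split_ifs with ha hb <;> omega
    · intro κ hκ hval
      simp only [swapFun] at hval
      split_ifs at hval with ha hb
      · omega
      · omega
      · exact hinj _ _ hκ hdv (hval.trans hvv.symm)

private lemma mWt_lt {n : ℕ} {α : List ℕ} {T' : ℕ × ℕ → ℕ} (hT' : IsSYRT n α T')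
    {i : ℕ} (h1 : 1 ≤ i) (h2 : i < n)
    (hc : (cellOf α T' i).1 < (cellOf α T' (i + 1)).1) :
    mWt n α (swapFun i T') < mWt n α T' := by
  obtain ⟨e1, e2, e3⟩ := swap_cells hT' h1 (by omega)
  have hmem : i ∈ Finset.Icc 1 n := by simp; omega
  have hmem1 : i + 1 ∈ (Finset.Icc 1 n).erase i := by
    simp [Finset.mem_erase]; omega
  have hsplit : ∀ g : ℕ → ℕ, ∑ v ∈ Finset.Icc 1 n, g v
      = (∑ v ∈ ((Finset.Icc 1 n).erase i).erase (i + 1), g v + g (i + 1)) + g i := by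
    intro g
    rw [Finset.sum_erase_add _ _ hmem1, Finset.sum_erase_add _ _ hmem]
  have hcongr : ∑ v ∈ ((Finset.Icc 1 n).erase i).erase (i + 1),
        v * (cellOf α (swapFun i T') v).1
      = ∑ v ∈ ((Finset.Icc 1 n).erase i).erase (i + 1), v * (cellOf α T' v).1 := by
    refine Finset.sum_congr rfl ?_
    intro v hv
    simp only [Finset.mem_erase, Finset.mem_Icc] at hv
    rw [e3 v hv.2.2.1 hv.2.2.2 hv.2.1 hv.1]
  unfold mWt
  rw [hsplit, hsplit, hcongr, e1, e2]
  set c1 := (cellOf α T' i).1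
  set c2 := (cellOf α T' (i + 1)).1
  have e4 : (i + 1) * c1 = i * c1 + c1 := by ring
  have e5 : (i + 1) * c2 = i * c2 + c2 := by ring
  linarith [hc]

end Stmt7Aux

/-- Every `∼`-equivalence class of `SYRT(α)` contains at least one
source tableau. -/
theorem stmt7 (n : ℕ) (α : List ℕ) (hα : YRS.IsComposition n α)
    (T₀ : ℕ × ℕ → ℕ) (hT₀ : YRS.IsSYRT n α T₀) :
    ∃ T, YRS.IsSYRT n α T ∧ YRS.simRel α T T₀ ∧ YRS.IsSource n α T := by
  classical
  set B : Set ℕ := {k | ∃ S, YRS.IsSYRT n α S ∧ YRS.simRel α S T₀ ∧ mWt n α S = k} with hB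
  have hne : B.Nonempty := ⟨mWt n α T₀, T₀, hT₀, fun c r r' _ _ => Iff.rfl, rfl⟩
  have hbdd : BddAbove B := by
    refine ⟨∑ v ∈ Finset.Icc 1 n, v * α.sum, ?_⟩
    rintro k ⟨S, hS, -, rfl⟩
    unfold mWt
    refine Finset.sum_le_sum ?_
    intro v hv
    simp only [Finset.mem_Icc] at hv
    obtain ⟨hd, -⟩ := cellOf_spec hS hv.1 hv.2
    have h1 := hd.2.2.2
    have h2 := getD_le_sum' α ((YRS.cellOf α S v).2 - 1)
    exact Nat.mul_le_mul_left v (by omega)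
  have hmem : sSup B ∈ B := Nat.sSup_mem hne hbdd
  obtain ⟨S, hS, hsim, hmax⟩ : ∃ S, YRS.IsSYRT n α S ∧ YRS.simRel α S T₀ ∧
      mWt n α S = sSup B := hmem
  refine ⟨S, hS, hsim, ?_⟩
  rintro ⟨T', hT', hsimT, hneT, i, h1i, hin, hpi⟩
  have hT'cls : YRS.simRel α T' T₀ := fun c r r' h h' =>
    (hsimT c r r' h h').trans (hsim c r r' h h')
  have hmem' : mWt n α T' ∈ B := ⟨T', hT', hT'cls, rfl⟩
  have hle : mWt n α T' ≤ sSup B := le_csSup hbdd hmem'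
  unfold YRS.piFun at hpi
  split_ifs at hpi with hcle hadj
  · exact hneT (Option.some.inj hpi)
  · have hSswap : YRS.swapFun i T' = S := Option.some.inj hpi
    have hlt := mWt_lt hT' h1i hin (Nat.lt_of_not_le hcle)
    rw [hSswap, hmax] at hlt
    omega
end

section
/- Let α be a composition of n. A cell κ in D(α) is removable if and only if there is some T ∈ SYRT(α) with entry n in κ. Moreover, for every T ∈ SYRT(α), the cell containing the entry n is a distinguished removable cell of T. -/
open Classical

namespace YRSAux
open YRS

lemma inD_mk {α : List ℕ} {c r : ℕ} :
    inDiagram α (c, r) ↔ 1 ≤ r ∧ r ≤ α.length ∧ 1 ≤ c ∧ c ≤ α.getD (r - 1) 0 :=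
  Iff.rfl

lemma getD_pos {α : List ℕ} (hpos : ∀ a ∈ α, 0 < a) {i : ℕ} (hi : i < α.length) :
    0 < α.getD i 0 := by
  rw [List.getD_eq_getElem α 0 hi]
  exact hpos _ (α.getElem_mem hi)

lemma sum_take_succ' (α : List ℕ) {i : ℕ} (h : i < α.length) :
    (α.take (i + 1)).sum = (α.take i).sum + α.getD i 0 := by
  rw [List.sum_take_succ α i h, List.getD_eq_getElem α 0 h]

lemma sum_take_pred (α : List ℕ) {r : ℕ} (h1 : 1 ≤ r) (h2 : r ≤ α.length) :
    (α.take r).sum = (α.take (r - 1)).sum + α.getD (r - 1) 0 := by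
  have h : r - 1 + 1 = r := by omega
  calc (α.take r).sum = (α.take (r - 1 + 1)).sum := by rw [h]
    _ = (α.take (r - 1)).sum + α.getD (r - 1) 0 := sum_take_succ' α (by omega)

lemma sum_take_le_sum (α : List ℕ) (i : ℕ) : (α.take i).sum ≤ α.sum := by
  conv_rhs => rw [← List.take_append_drop i α]
  rw [List.sum_append]
  omega

lemma sum_take_mono (α : List ℕ) {i j : ℕ} (h : i ≤ j) :
    (α.take i).sum ≤ (α.take j).sum := by
  have heq : α.take i = (α.take j).take i := by
    rw [List.take_take, Nat.min_eq_left h]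
  rw [heq]
  exact sum_take_le_sum (α.take j) i

lemma sum_take_strict {α : List ℕ} (hpos : ∀ a ∈ α, 0 < a) {i j : ℕ}
    (hij : i < j) (hj : j ≤ α.length) : (α.take i).sum < (α.take j).sum := by
  have h1 : (α.take (i + 1)).sum = (α.take i).sum + α.getD i 0 := sum_take_succ' α (by omega)
  have h2 : 0 < α.getD i 0 := getD_pos hpos (by omega)
  have h3 : (α.take (i + 1)).sum ≤ (α.take j).sum := sum_take_mono α (by omega)
  omega

lemma rowFill_val {α : List ℕ} {κ : ℕ × ℕ} (h : inDiagram α κ) :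
    rowFill α κ = (α.take (κ.2 - 1)).sum + κ.1 := by
  simp [rowFill, h]

lemma cell_unique {α : List ℕ} (hpos : ∀ a ∈ α, 0 < a) {κ κ' : ℕ × ℕ}
    (h : inDiagram α κ) (h' : inDiagram α κ')
    (he : (α.take (κ.2 - 1)).sum + κ.1 = (α.take (κ'.2 - 1)).sum + κ'.1) : κ = κ' := by
  obtain ⟨h1, h2, h3, h4⟩ := h
  obtain ⟨h1', h2', h3', h4'⟩ := h'
  have key : ∀ r r' : ℕ, 1 ≤ r → 1 ≤ r' → r < r' → r' ≤ α.length →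
      ∀ c c' : ℕ, c ≤ α.getD (r - 1) 0 → 1 ≤ c' →
      (α.take (r - 1)).sum + c < (α.take (r' - 1)).sum + c' := by
    intro r r' hr hr' hlt hle c c' hc hc'
    have e1 : (α.take r).sum = (α.take (r - 1)).sum + α.getD (r - 1) 0 :=
      sum_take_pred α hr (by omega)
    have e2 : (α.take r).sum ≤ (α.take (r' - 1)).sum := sum_take_mono α (by omega)
    omega
  rcases lt_trichotomy κ.2 κ'.2 with hlt | heq | hgt
  · exact absurd he (by have := key κ.2 κ'.2 h1 h1' hlt h2' κ.1 κ'.1 h4 h3'; omega)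
  · have : κ.1 = κ'.1 := by rw [heq] at he; omega
    exact Prod.ext this heq
  · exact absurd he (by have := key κ'.2 κ.2 h1' h1 hgt h2 κ'.1 κ.1 h4' h3; omega)

lemma exists_cell {α : List ℕ} (hpos : ∀ a ∈ α, 0 < a) {v : ℕ}
    (h1 : 1 ≤ v) (h2 : v ≤ α.sum) :
    ∃ c r, inDiagram α (c, r) ∧ (α.take (r - 1)).sum + c = v := by
  have hex : ∃ j, v ≤ (α.take j).sum := ⟨α.length, by simpa using h2⟩
  classical
  set r := Nat.find hex with hr
  have hspec : v ≤ (α.take r).sum := Nat.find_spec hex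
  have hrle : r ≤ α.length := Nat.find_le (by simpa using h2)
  have hr1 : 1 ≤ r := by
    rcases Nat.eq_zero_or_pos r with h | h
    · exfalso; have h5 := hspec; rw [h] at h5; simp at h5; omega
    · exact h
  have hmin : ¬ v ≤ (α.take (r - 1)).sum := Nat.find_min hex (by omega)
  have e1 : (α.take r).sum = (α.take (r - 1)).sum + α.getD (r - 1) 0 :=
    sum_take_pred α hr1 hrle
  exact ⟨v - (α.take (r - 1)).sum, r,
    inD_mk.mpr ⟨hr1, hrle, by omega, by omega⟩, by omega⟩

lemma rowFill_isSYRT {n : ℕ} {α : List ℕ} (hc : IsComposition n α) :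
    IsSYRT n α (rowFill α) := by
  obtain ⟨hpos, hsum⟩ := hc
  have hub : ∀ c r : ℕ, inDiagram α (c, r) → (α.take (r - 1)).sum + c ≤ n := by
    intro c r h
    rw [inD_mk] at h
    obtain ⟨h1, h2, h3, h4⟩ := h
    have e1 : (α.take r).sum = (α.take (r - 1)).sum + α.getD (r - 1) 0 :=
      sum_take_pred α h1 h2
    have e2 : (α.take r).sum ≤ α.sum := sum_take_le_sum α r
    omega
  refine ⟨fun κ h => by simp [rowFill, h], ?_, ?_, ?_, ?_, ?_, ?_⟩
  · rintro ⟨c, r⟩ hκ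
    rw [rowFill_val hκ]
    have h3 := (inD_mk.mp hκ).2.2.1
    exact ⟨by dsimp only; omega, by dsimp only; exact hub c r hκ⟩
  · intro κ κ' h h' he
    rw [rowFill_val h, rowFill_val h'] at he
    exact cell_unique hpos h h' he
  · intro v hv1 hv2
    obtain ⟨c, r, hκ, he⟩ := exists_cell hpos hv1 (by omega)
    exact ⟨(c, r), hκ, by rw [rowFill_val hκ]; dsimp only; exact he⟩
  · intro c r h h'
    rw [rowFill_val h, rowFill_val h']
    dsimp only; omega
  · intro r r' h h' hlt
    rw [rowFill_val h, rowFill_val h']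
    have hx : (α.take (r - 1)).sum < (α.take (r' - 1)).sum :=
      sum_take_strict hpos (by have := (inD_mk.mp h).1; omega)
        (by have := (inD_mk.mp h').2.1; omega)
    dsimp only; omega
  · intro c r r' hlt h h' hT
    exfalso
    rw [rowFill_val h, rowFill_val h'] at hT
    have hx : (α.take (r' - 1)).sum < (α.take (r - 1)).sum :=
      sum_take_strict hpos (by have := (inD_mk.mp h').1; omega)
        (by have := (inD_mk.mp h).2.1; omega)
    dsimp only at hT; omega

/-- The filling with `n` at the removable cell `(c, r)` and the row-by-row filling of the
reduced shape elsewhere. -/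
noncomputable def extFill (α : List ℕ) (c r n : ℕ) : ℕ × ℕ → ℕ := fun κ =>
  if κ = (c, r) then n else rowFill (α.set (r - 1) (α.getD (r - 1) 0 - 1)) κ

lemma ext_isSYRT {n : ℕ} {α : List ℕ} {c r : ℕ} (hc : IsComposition n α)
    (hD : inDiagram α (c, r)) (hcr : c = α.getD (r - 1) 0)
    (h2 : 2 ≤ α.getD (r - 1) 0)
    (hcond : ∀ j, r < j → j ≤ α.length → α.getD (j - 1) 0 + 1 ≠ α.getD (r - 1) 0) :
    IsSYRT n α (extFill α c r n) := by
  obtain ⟨hpos, hsum⟩ := hc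
  obtain ⟨hr1, hr2, hc1, hc2⟩ := inD_mk.mp hD
  set β := α.set (r - 1) (α.getD (r - 1) 0 - 1) with hβ
  have hrlen : r - 1 < α.length := by omega
  have hlen : β.length = α.length := List.length_set
  have hgr : β.getD (r - 1) 0 = α.getD (r - 1) 0 - 1 := by
    rw [List.getD_eq_getElem _ 0 (by rw [hlen]; exact hrlen), List.getElem_set_self]
  have hgne : ∀ i, i ≠ r - 1 → β.getD i 0 = α.getD i 0 := by
    intro i hi
    by_cases h : i < α.length
    · rw [List.getD_eq_getElem _ 0 (by rw [hlen]; exact h), List.getD_eq_getElem _ 0 h,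
        List.getElem_set_ne (by omega)]
    · rw [List.getD_eq_default _ _ (by rw [hlen]; omega), List.getD_eq_default _ _ (by omega)]
  have hβpos : ∀ a ∈ β, 0 < a := by
    intro a ha
    rcases List.mem_or_eq_of_mem_set ha with h | h
    · exact hpos a h
    · omega
  have hβsum : β.sum + 1 = n := by
    have hset := List.sum_set α (r - 1) (α.getD (r - 1) 0 - 1)
    rw [if_pos hrlen] at hset
    have hα : α.sum = (α.take (r - 1)).sum + α.getD (r - 1) 0 + (α.drop (r - 1 + 1)).sum := by
      conv_lhs => rw [← List.take_append_drop (r - 1 + 1) α]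
      rw [List.sum_append, sum_take_succ' α hrlen]
    rw [← hβ] at hset
    omega
  have hDβα : ∀ κ, inDiagram β κ → inDiagram α κ := by
    rintro ⟨c', r'⟩ h
    rw [inD_mk] at h ⊢
    obtain ⟨h1, h2', h3, h4⟩ := h
    rw [hlen] at h2'
    refine ⟨h1, h2', h3, ?_⟩
    by_cases h : r' - 1 = r - 1
    · rw [h, hgr] at h4; rw [h]; omega
    · rwa [hgne _ h] at h4
  have hDαβ : ∀ κ, inDiagram α κ → κ ≠ (c, r) → inDiagram β κ := by
    rintro ⟨c', r'⟩ h hne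
    rw [inD_mk] at h ⊢
    obtain ⟨h1, h2', h3, h4⟩ := h
    rw [hlen]
    refine ⟨h1, h2', h3, ?_⟩
    by_cases h : r' = r
    · subst h
      have hcc : c' ≠ c := fun h => hne (by rw [h])
      rw [hgr]; omega
    · rw [hgne _ (by omega)]; exact h4
  have hκβ : ¬ inDiagram β (c, r) := by
    intro h
    have h4 := (inD_mk.mp h).2.2.2
    rw [hgr] at h4; omega
  obtain ⟨hoff, hbnd, hinj, hsurj, hrow, hcol, hR3⟩ :=
    rowFill_isSYRT (n := n - 1) (α := β) ⟨hβpos, by omega⟩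
  have hlt : ∀ κ, inDiagram β κ → rowFill β κ < n := by
    intro κ h
    have := (hbnd κ h).2
    omega
  have hne_of_mem : ∀ κ, inDiagram β κ → κ ≠ (c, r) := by
    intro κ h he; exact hκβ (he ▸ h)
  refine ⟨?_, ?_, ?_, ?_, ?_, ?_, ?_⟩
  · intro κ h
    have hne : κ ≠ (c, r) := by
      intro he; subst he; exact h hD
    simp only [extFill, ← hβ]; rw [if_neg hne]
    exact hoff κ (fun hb => h (hDβα κ hb))
  · intro κ hκ
    by_cases h : κ = (c, r)
    · simp only [extFill, ← hβ]; rw [if_pos h]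
      constructor <;> omega
    · simp only [extFill, ← hβ]; rw [if_neg h]
      have := hbnd κ (hDαβ κ hκ h)
      omega
  · intro κ κ' hκ hκ' he
    by_cases h : κ = (c, r) <;> by_cases h' : κ' = (c, r)
    · rw [h, h']
    · exfalso
      simp only [extFill, ← hβ] at he
      rw [if_pos h, if_neg h'] at he
      exact absurd he.symm (Nat.ne_of_lt (hlt κ' (hDαβ κ' hκ' h')))
    · exfalso
      simp only [extFill, ← hβ] at he
      rw [if_neg h, if_pos h'] at he
      exact absurd he (Nat.ne_of_lt (hlt κ (hDαβ κ hκ h)))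
    · simp only [extFill, ← hβ] at he
      rw [if_neg h, if_neg h'] at he
      exact hinj κ κ' (hDαβ κ hκ h) (hDαβ κ' hκ' h') he
  · intro v hv1 hv2
    by_cases h : v = n
    · exact ⟨(c, r), hD, by rw [h]; simp [extFill]⟩
    · obtain ⟨κ, hκ, he⟩ := hsurj v hv1 (by omega)
      refine ⟨κ, hDβα κ hκ, ?_⟩
      simp only [extFill, ← hβ]; rw [if_neg (hne_of_mem κ hκ)]
      exact he
  · intro c' r' h h'
    by_cases hx : ((c' + 1 : ℕ), r') = (c, r)
    · have hy : ((c' : ℕ), r') ≠ (c, r) := by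
        rw [Prod.mk.injEq] at hx; simp only [ne_eq, Prod.mk.injEq]; omega
      simp only [extFill, ← hβ]; rw [if_pos hx, if_neg hy]
      exact hlt _ (hDαβ _ h hy)
    · by_cases hy : ((c' : ℕ), r') = (c, r)
      · exfalso
        rw [Prod.mk.injEq] at hy
        have h4' := (inD_mk.mp h').2.2.2
        rw [hy.2] at h4'
        omega
      · simp only [extFill, ← hβ]; rw [if_neg hy, if_neg hx]
        exact hrow c' r' (hDαβ _ h hy) (hDαβ _ h' hx)
  · intro r₁ r₂ h h' hlt'
    have h1 : ((1 : ℕ), r₁) ≠ (c, r) := by simp only [ne_eq, Prod.mk.injEq]; omega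
    have h2' : ((1 : ℕ), r₂) ≠ (c, r) := by simp only [ne_eq, Prod.mk.injEq]; omega
    simp only [extFill, ← hβ]; rw [if_neg h1, if_neg h2']
    exact hcol r₁ r₂ (hDαβ _ h h1) (hDαβ _ h' h2') hlt'
  · intro c' rb rs hlt' hb hs hT
    by_cases hx : ((c' : ℕ), rb) = (c, r)
    · exfalso
      simp only [extFill, ← hβ] at hT
      rw [if_pos hx] at hT
      by_cases hy : ((c' + 1 : ℕ), rs) = (c, r)
      · rw [Prod.mk.injEq] at hx hy; omega
      · rw [if_neg hy] at hT
        have := hlt _ (hDαβ _ hs hy)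
        omega
    · by_cases hy : ((c' + 1 : ℕ), rs) = (c, r)
      · -- key case
        rw [Prod.mk.injEq] at hy
        obtain ⟨hcc1, hrs⟩ := hy
        obtain ⟨hb1, hb2, hb3, hb4⟩ := inD_mk.mp hb
        have hane : α.getD (rb - 1) 0 + 1 ≠ α.getD (r - 1) 0 := hcond rb (by omega) hb2
        have hmem : inDiagram α (c' + 1, rb) := inD_mk.mpr ⟨hb1, hb2, by omega, by omega⟩
        refine ⟨hmem, ?_⟩
        have hne2 : ((c' + 1 : ℕ), rb) ≠ (c, r) := by simp only [ne_eq, Prod.mk.injEq]; omega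
        simp only [extFill, ← hβ]
        rw [if_neg hne2, if_pos (show ((c' + 1 : ℕ), rs) = (c, r) by rw [hcc1, hrs])]
        exact hlt _ (hDαβ _ hmem hne2)
      · simp only [extFill, ← hβ] at hT
        rw [if_neg hx, if_neg hy] at hT
        obtain ⟨hm, hv⟩ := hR3 c' rb rs hlt' (hDαβ _ hb hx) (hDαβ _ hs hy) hT
        refine ⟨hDβα _ hm, ?_⟩
        simp only [extFill, ← hβ]; rw [if_neg (hne_of_mem _ hm), if_neg hy]
        exact hv

lemma part2 {n : ℕ} {α : List ℕ} (hc : IsComposition n α) (hn : 1 ≤ n)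
    {T : ℕ × ℕ → ℕ} (hT : IsSYRT n α T) {κ : ℕ × ℕ} (hκ : T κ = n) :
    DistRemovable α T κ := by
  obtain ⟨hpos, hsum⟩ := hc
  obtain ⟨hoff, hbnd, hinj, hsurj, hrow, hcol, hR3⟩ := hT
  have hκD : inDiagram α κ := by
    by_contra h
    rw [hoff κ h] at hκ; omega
  obtain ⟨c, r⟩ := κ
  obtain ⟨h1, h2, h3, h4⟩ := inD_mk.mp hκD
  have hothers : ∀ κ', inDiagram α κ' → κ' ≠ (c, r) → T κ' < n := by
    intro κ' hD' hne
    have hle := (hbnd κ' hD').2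
    rcases lt_or_eq_of_le hle with h | h
    · exact h
    · exact absurd (hinj κ' (c, r) hD' hκD (by rw [h, hκ])) hne
  have hcval : c = α.getD (r - 1) 0 := by
    by_contra h
    have hmem : inDiagram α (c + 1, r) := inD_mk.mpr ⟨h1, h2, by omega, by omega⟩
    have hr' := hrow c r hκD hmem
    have hb' := (hbnd _ hmem).2
    rw [hκ] at hr'
    omega
  refine ⟨⟨hκD, hcval, ?_⟩, ?_⟩
  · dsimp only
    by_cases hr : r = α.length
    · exact Or.inl hr
    · refine Or.inr ⟨?_, ?_⟩
      · by_contra hlt'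
        push_neg at hlt'
        have hα1 : α.getD (r - 1) 0 = 1 := by omega
        have hcm : c = 1 := by omega
        have hmem : inDiagram α (1, r + 1) := by
          refine inD_mk.mpr ⟨by omega, by omega, le_refl 1, ?_⟩
          have := getD_pos hpos (i := r + 1 - 1) (by omega)
          omega
        subst hcm
        have hcol' := hcol r (r + 1) hκD hmem (by omega)
        have hb' := (hbnd _ hmem).2
        rw [hκ] at hcol'
        omega
      · intro j hj1 hj2 heq
        have hc2 : 2 ≤ c := by
          have := getD_pos hpos (i := j - 1) (by omega)
          omega
        have hjD : inDiagram α (c - 1, j) := inD_mk.mpr ⟨by omega, hj2, by omega, by omega⟩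
        have hjlt : T (c - 1, j) < n := hothers _ hjD (by simp only [ne_eq, Prod.mk.injEq]; omega)
        have hc1e : c - 1 + 1 = c := by omega
        have hkey := hR3 (c - 1) j r hj1 hjD (by rw [hc1e]; exact hκD)
          (by rw [hc1e, hκ]; exact hjlt)
        have hmem4 := (inD_mk.mp hkey.1).2.2.2
        rw [hc1e] at hmem4
        omega
  · dsimp only
    intro r' hD' hne
    rw [hκ]
    exact hothers _ hD' (by simp only [ne_eq, Prod.mk.injEq]; omega)

theorem stmt8' (n : ℕ) (α : List ℕ) (hα : IsComposition n α) (hn : 1 ≤ n) :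
    (∀ κ, Removable α κ ↔ ∃ T, IsSYRT n α T ∧ T κ = n) ∧
    (∀ T, IsSYRT n α T → ∀ κ, T κ = n → DistRemovable α T κ) := by
  refine ⟨fun κ => ⟨?_, ?_⟩, fun T hT κ hκ => part2 hα hn hT hκ⟩
  · intro hrem
    obtain ⟨hD, hcr, hdisj⟩ := hrem
    obtain ⟨c, r⟩ := κ
    obtain ⟨h1, h2, h3, h4⟩ := inD_mk.mp hD
    dsimp only at hcr hdisj
    obtain ⟨hpos, hsum⟩ := hα
    by_cases hr : r = α.length
    · refine ⟨rowFill α, rowFill_isSYRT ⟨hpos, hsum⟩, ?_⟩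
      rw [rowFill_val hD]
      have he : (α.take r).sum = (α.take (r - 1)).sum + α.getD (r - 1) 0 :=
        sum_take_pred α h1 h2
      have he2 : (α.take r).sum = α.sum := by rw [hr, List.take_length]
      dsimp only
      omega
    · have hcond : 2 ≤ α.getD (r - 1) 0 ∧
          ∀ j, r < j → j ≤ α.length → α.getD (j - 1) 0 + 1 ≠ α.getD (r - 1) 0 := by
        rcases hdisj with h | h
        · exact absurd h hr
        · exact h
      refine ⟨extFill α c r n, ext_isSYRT ⟨hpos, hsum⟩ hD hcr hcond.1 hcond.2, ?_⟩
      simp [extFill]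
  · rintro ⟨T, hT, hκ⟩
    exact (part2 hα hn hT hκ).1

end YRSAux

/-- A cell `κ` of `D(α)` is removable iff some `T ∈ SYRT(α)` has entry
`n` in `κ`; moreover the cell containing `n` in any `T ∈ SYRT(α)` is a distinguished
removable cell of `T`. -/
theorem stmt8 (n : ℕ) (α : List ℕ) (hα : YRS.IsComposition n α) (hn : 1 ≤ n) :
    (∀ κ, YRS.Removable α κ ↔ ∃ T, YRS.IsSYRT n α T ∧ T κ = n) ∧
    (∀ T, YRS.IsSYRT n α T → ∀ κ, T κ = n → YRS.DistRemovable α T κ) := by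
  exact YRSAux.stmt8' n α hα hn
end
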